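/- For all words v, w ∈ A* and all t ∈ [0,T], the iterated-integral functional is a homomorphism for the shuffle product: Υ^t(v ⧢ w) = Υ^t(v) · Υ^t(w), where v ⧢ w is the finite linear combination of words given by the shuffle product and Υ^t is extended ℝ-linearly to such combinations. -/
import Mathlib


/-! STATEMENT 17: the iterated-integral functional `Υ^t` is a homomorphism for
the shuffle product: `Υ^t(v ⧢ w) = Υ^t(v)·Υ^t(w)`. -/

/-- The three-letter alphabet `A = {a, b, c}`. -/
inductive Letter : Type
  | a | b | c
deriving DecidableEq

/-- Words on the alphabet. -/
abbrev Word := List Letter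

/-- Noncommutative power series over `ℝ` on the alphabet (here used for the
finite linear combinations of words arising as shuffles of two words). -/
abbrev Series := Word → ℝ

/-- The series associated to a single word. -/
def ofWord (v : Word) : Series := fun w => if w = v then 1 else 0

/-- Concatenation product of series. -/
noncomputable def cmul (P Q : Series) : Series :=
  fun w => ∑ i ∈ Finset.range (w.length + 1), P (w.take i) * Q (w.drop i)

/-- Auxiliary: the shuffle product of two *reversed* words, defined by structural
recursion on the first letters (which are the *last* letters of the original
words), with values in series:
`shRev (a₁ rev w₁) (a₂ rev w₂) = (shRev (rev w₁) (a₂ rev w₂))·a₁ + (shRev (a₁ rev w₁) (rev w₂))·a₂`. -/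
noncomputable def shRev : Word → Word → Series
  | [], w => ofWord w.reverse
  | v, [] => ofWord v.reverse
  | a₁ :: v, a₂ :: w =>
      cmul (shRev v (a₂ :: w)) (ofWord [a₁]) + cmul (shRev (a₁ :: v) w) (ofWord [a₂])
  termination_by v w => v.length + w.length

/-- The shuffle product of two words, namely the finite linear combination of
words determined by the right recursion `ε⧢w = w⧢ε = w` and
`(w₁a₁)⧢(w₂a₂) = (w₁⧢(w₂a₂))a₁ + ((w₁a₁)⧢w₂)a₂`. -/
noncomputable def shufWord (v w : Word) : Series := shRev v.reverse w.reverse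

/-- Iterated integral on the reversed word:
`UpsRev u (aₙ…a₁) t = ∫₀^t u_{aₙ}(s)·UpsRev u (a_{n−1}…a₁) s ds`. -/
noncomputable def UpsRev (u : Letter → ℝ → ℝ) : Word → ℝ → ℝ
  | [], _ => 1
  | d :: w, t => ∫ s in (0 : ℝ)..t, u d s * UpsRev u w s

/-- The iterated integral
`Υ^t(a₁⋯aₙ) = ∫₀^t u_{aₙ}(tₙ) ∫₀^{tₙ} ⋯ ∫₀^{t₂} u_{a₁}(t₁) dt₁ ⋯ dtₙ`, with `Υ^t(ε) = 1`. -/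
noncomputable def Ups (u : Letter → ℝ → ℝ) (w : Word) (t : ℝ) : ℝ := UpsRev u w.reverse t

/-- The `ℝ`-linear extension of `Υ^t` to finite linear combinations of words. -/
noncomputable def UpsExt (u : Letter → ℝ → ℝ) (t : ℝ) (P : Series) : ℝ :=
  ∑ᶠ w : Word, P w * Ups u w t

-- MARKER: everything below added after defs
open MeasureTheory Set

section Alg

lemma shRev_nil (w : Word) : shRev [] w = ofWord w.reverse := by rw [shRev]
lemma shRev_nil' (d : Letter) (v : Word) : shRev (d :: v) [] = ofWord (d :: v).reverse := by
  rw [shRev]; simp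
lemma shRev_cons (a₁ : Letter) (v : Word) (a₂ : Letter) (w : Word) :
    shRev (a₁ :: v) (a₂ :: w) =
    cmul (shRev v (a₂ :: w)) (ofWord [a₁]) + cmul (shRev (a₁ :: v) w) (ofWord [a₂]) := by
  rw [shRev]

lemma support_cmul_single (P : Series) (d : Letter) :
    Function.support (cmul P (ofWord [d])) ⊆ (fun w => w ++ [d]) '' Function.support P := by
  intro w hw
  obtain ⟨i, -, hi⟩ := Finset.exists_ne_zero_of_sum_ne_zero hw
  have h1 : P (w.take i) ≠ 0 := fun h => hi (by simp [h])
  have h2 : w.drop i = [d] := by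
    by_contra h
    exact hi (by simp [ofWord, h])
  exact ⟨w.take i, h1, by rw [← h2]; exact w.take_append_drop i⟩

lemma cmul_single_append (P : Series) (d : Letter) (v : Word) :
    cmul P (ofWord [d]) (v ++ [d]) = P v := by
  unfold cmul
  rw [Finset.sum_eq_single v.length]
  · simp [ofWord]
  · intro i hi hne
    have : (v ++ [d]).drop i ≠ [d] := by
      intro h
      have := congrArg List.length h
      simp at this hi
      omega
    simp [ofWord, this]
  · intro h; simp at h

lemma support_ofWord (v : Word) : Function.support (ofWord v) ⊆ {v} := by
  intro x hx
  by_contra hne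
  simp only [Set.mem_singleton_iff] at hne
  simp [ofWord, hne] at hx

lemma support_shRev_finite : ∀ v w : Word, (Function.support (shRev v w)).Finite := by
  have key : ∀ n (v w : Word), v.length + w.length ≤ n →
      (Function.support (shRev v w)).Finite := by
    intro n
    induction n with
    | zero =>
      intro v w h
      simp only [Nat.le_zero, Nat.add_eq_zero, List.length_eq_zero_iff] at h
      obtain ⟨rfl, rfl⟩ := h
      rw [shRev_nil]
      exact (Set.finite_singleton _).subset (support_ofWord _)
    | succ n ih =>
      intro v w h
      match v, w with
      | [], w =>
        rw [shRev_nil]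
        exact (Set.finite_singleton _).subset (support_ofWord _)
      | a :: v, [] =>
        rw [shRev_nil']
        exact (Set.finite_singleton _).subset (support_ofWord _)
      | a₁ :: v, a₂ :: w =>
        rw [shRev_cons]
        refine Set.Finite.subset ?_ (Function.support_add _ _)
        simp only [List.length_cons] at h
        apply Set.Finite.union
        · exact (((ih v (a₂ :: w) (by simp; omega)).image _)).subset (support_cmul_single _ _)
        · exact (((ih (a₁ :: v) w (by simp; omega)).image _)).subset (support_cmul_single _ _)
  exact fun v w => key (v.length + w.length) v w le_rfl

end Alg

section Anal

lemma integrableOn_mul_contOn {a b : ℝ} {g h : ℝ → ℝ} (hg : IntegrableOn g (Icc a b))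
    (hh : ContinuousOn h (Icc a b)) : IntegrableOn (fun s => g s * h s) (Icc a b) := by
  obtain ⟨C, hC⟩ := (isCompact_Icc (a := a) (b := b)).exists_bound_of_continuousOn hh
  refine Integrable.mono' (hg.norm.mul_const C)
    (hg.aestronglyMeasurable.mul (hh.aestronglyMeasurable measurableSet_Icc)) ?_
  refine (ae_restrict_iff' measurableSet_Icc).2 (Filter.Eventually.of_forall fun x hx => ?_)
  simp only [norm_mul, Real.norm_eq_abs]
  exact mul_le_mul_of_nonneg_left (by simpa using hC x hx) (abs_nonneg _)

lemma intervalIntegrable_of_integrableOn_Icc {f : ℝ → ℝ} {a b : ℝ} (hab : a ≤ b)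
    (hf : IntegrableOn f (Icc a b)) : IntervalIntegrable f volume a b :=
  (intervalIntegrable_iff_integrableOn_Ioc_of_le hab).2 (hf.mono_set Ioc_subset_Icc_self)

lemma prod_rule_core {t : ℝ} (ht : 0 ≤ t) {f g : ℝ → ℝ} (hfm : Measurable f) (hgm : Measurable g)
    (hf : IntegrableOn f (Icc 0 t)) (hg : IntegrableOn g (Icc 0 t)) :
    (∫ s in (0:ℝ)..t, f s) * (∫ s in (0:ℝ)..t, g s)
      = (∫ s in (0:ℝ)..t, f s * ∫ r in (0:ℝ)..s, g r)
        + ∫ s in (0:ℝ)..t, (∫ r in (0:ℝ)..s, f r) * g s := by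
  set Φ : ℝ → ℝ → ℝ := fun x y => (Ioc (0:ℝ) t).indicator f x * (Ioc (0:ℝ) x).indicator g y with hΦ
  have hmeasΦ : Measurable (Function.uncurry Φ) := by
    have h1 : Function.uncurry Φ = fun p : ℝ × ℝ =>
        (Set.indicator {p : ℝ × ℝ | p.1 ∈ Ioc (0:ℝ) t} (fun p => f p.1) p) *
        (Set.indicator {p : ℝ × ℝ | 0 < p.2 ∧ p.2 ≤ p.1} (fun p => g p.2) p) := by
      funext p
      simp only [Function.uncurry, hΦ, Set.indicator_apply, Set.mem_setOf_eq, Set.mem_Ioc]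
    rw [h1]
    have hs1 : MeasurableSet {p : ℝ × ℝ | p.1 ∈ Ioc (0:ℝ) t} :=
      measurable_fst measurableSet_Ioc
    have hs2 : MeasurableSet {p : ℝ × ℝ | 0 < p.2 ∧ p.2 ≤ p.1} :=
      (measurableSet_lt measurable_const measurable_snd).inter
        (measurableSet_le measurable_snd measurable_fst)
    exact ((hfm.comp measurable_fst).indicator hs1).mul ((hgm.comp measurable_snd).indicator hs2)
  have hintΦ : Integrable (Function.uncurry Φ) (volume.prod volume) := by
    have hD : Integrable (fun p : ℝ × ℝ =>
        (Ioc (0:ℝ) t).indicator (fun x => |f x|) p.1 *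
        (Ioc (0:ℝ) t).indicator (fun y => |g y|) p.2) ((volume : Measure ℝ).prod volume) :=
      Integrable.mul_prod
        ((integrable_indicator_iff measurableSet_Ioc).2 (hf.mono_set Ioc_subset_Icc_self).abs)
        ((integrable_indicator_iff measurableSet_Ioc).2 (hg.mono_set Ioc_subset_Icc_self).abs)
    refine hD.mono' hmeasΦ.aestronglyMeasurable (Filter.Eventually.of_forall fun p => ?_)
    simp only [Function.uncurry, hΦ, Real.norm_eq_abs, abs_mul]
    by_cases hx : p.1 ∈ Ioc (0:ℝ) t
    · by_cases hy : p.2 ∈ Ioc (0:ℝ) p.1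
      · have hy' : p.2 ∈ Ioc (0:ℝ) t := ⟨hy.1, hy.2.trans hx.2⟩
        rw [Set.indicator_of_mem hx, Set.indicator_of_mem hy, Set.indicator_of_mem hx,
          Set.indicator_of_mem hy']
      · rw [Set.indicator_of_notMem hy]
        simp only [abs_zero, mul_zero]
        exact mul_nonneg (Set.indicator_nonneg (fun _ _ => abs_nonneg _) _)
          (Set.indicator_nonneg (fun _ _ => abs_nonneg _) _)
    · rw [Set.indicator_of_notMem hx]
      simp only [abs_zero, zero_mul]
      exact mul_nonneg (Set.indicator_nonneg (fun _ _ => abs_nonneg _) _)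
        (Set.indicator_nonneg (fun _ _ => abs_nonneg _) _)
  have swap := MeasureTheory.integral_integral_swap hintΦ
  have hA : (∫ x, ∫ y, Φ x y) = ∫ s in (0:ℝ)..t, f s * ∫ r in (0:ℝ)..s, g r := by
    have h1 : ∀ x, (∫ y, Φ x y) =
        (Ioc (0:ℝ) t).indicator (fun x => f x * ∫ r in Ioc (0:ℝ) x, g r) x := by
      intro x
      have : (∫ y, Φ x y) = (Ioc (0:ℝ) t).indicator f x * ∫ y in Ioc (0:ℝ) x, g y := by
        rw [hΦ]
        rw [MeasureTheory.integral_const_mul]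
        rw [MeasureTheory.integral_indicator measurableSet_Ioc]
      rw [this]
      by_cases hx : x ∈ Ioc (0:ℝ) t
      · rw [Set.indicator_of_mem hx, Set.indicator_of_mem hx]
      · rw [Set.indicator_of_notMem hx, Set.indicator_of_notMem hx, zero_mul]
    simp only [h1]
    rw [MeasureTheory.integral_indicator measurableSet_Ioc,
      intervalIntegral.integral_of_le ht]
    refine setIntegral_congr_fun measurableSet_Ioc fun x hx => ?_
    rw [intervalIntegral.integral_of_le hx.1.le]
  have hB : (∫ y, ∫ x, Φ x y) =
      ∫ s in (0:ℝ)..t, ((∫ r in (0:ℝ)..t, f r) - ∫ r in (0:ℝ)..s, f r) * g s := by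
    have h1 : ∀ y, (∫ x, Φ x y) =
        (Ioc (0:ℝ) t).indicator (fun y => (∫ x in Icc y t, f x) * g y) y := by
      intro y
      have h2 : (fun x => Φ x y) = fun x =>
          (Ioc (0:ℝ) t ∩ Ici y).indicator f x * (Ioi (0:ℝ)).indicator g y := by
        funext x
        simp only [hΦ, Set.indicator_apply, Set.mem_Ioc, Set.mem_inter_iff, Set.mem_Ici,
          Set.mem_Ioi]
        by_cases h0x : 0 < x ∧ x ≤ t
        · by_cases hyx : 0 < y ∧ y ≤ x
          · rw [if_pos h0x, if_pos hyx, if_pos ⟨h0x, hyx.2⟩, if_pos hyx.1]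
          · rw [if_pos h0x, if_neg hyx]
            by_cases hy0 : 0 < y
            · have : ¬ y ≤ x := fun h => hyx ⟨hy0, h⟩
              rw [if_neg (fun h : (0 < x ∧ x ≤ t) ∧ y ≤ x => this h.2), mul_zero, zero_mul]
            · rw [if_neg hy0, mul_zero, mul_zero]
        · rw [if_neg h0x, if_neg (fun h : (0 < x ∧ x ≤ t) ∧ y ≤ x => h0x h.1), zero_mul, zero_mul]
      rw [h2]
      rw [MeasureTheory.integral_mul_const, MeasureTheory.integral_indicator
        (measurableSet_Ioc.inter measurableSet_Ici)]
      by_cases hy : y ∈ Ioc (0:ℝ) t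
      · rw [Set.indicator_of_mem (Set.mem_Ioi.2 hy.1), Set.indicator_of_mem hy]
        congr 1
        have : Ioc (0:ℝ) t ∩ Ici y = Icc y t := by
          ext x
          simp only [Set.mem_inter_iff, Set.mem_Ioc, Set.mem_Ici, Set.mem_Icc]
          constructor
          · rintro ⟨⟨_, h2'⟩, h3⟩; exact ⟨h3, h2'⟩
          · rintro ⟨h1', h2'⟩; exact ⟨⟨lt_of_lt_of_le hy.1 h1', h2'⟩, h1'⟩
        rw [this]
      · rw [Set.indicator_of_notMem hy]
        simp only [Set.mem_Ioc, not_and_or, not_lt, not_le] at hy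
        rcases hy with hy | hy
        · rw [Set.indicator_of_notMem (by simpa using hy), mul_zero]
        · have : Ioc (0:ℝ) t ∩ Ici y = ∅ := by
            ext x
            simp only [Set.mem_inter_iff, Set.mem_Ioc, Set.mem_Ici, Set.mem_empty_iff_false,
              iff_false, not_and]
            rintro ⟨_, h2'⟩ h3
            linarith
          rw [this]
          simp
    simp only [h1]
    rw [MeasureTheory.integral_indicator measurableSet_Ioc,
      intervalIntegral.integral_of_le ht]
    refine setIntegral_congr_fun measurableSet_Ioc fun y hy => ?_
    congr 1
    rw [integral_Icc_eq_integral_Ioc, ← intervalIntegral.integral_of_le hy.2]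
    rw [← intervalIntegral.integral_interval_sub_left
      (intervalIntegrable_of_integrableOn_Icc ht hf)
      (intervalIntegrable_of_integrableOn_Icc hy.1.le
        (hf.mono_set (Icc_subset_Icc_right hy.2)))]
  have hFcont : ContinuousOn (fun s => ∫ r in (0:ℝ)..s, f r) (Icc 0 t) := by
    have := intervalIntegral.continuousOn_primitive_interval
      (μ := volume) (a := (0:ℝ)) (b := t) (f := f) (by rwa [uIcc_of_le ht])
    rwa [uIcc_of_le ht] at this
  have hFg : IntervalIntegrable (fun s => (∫ r in (0:ℝ)..s, f r) * g s) volume 0 t := by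
    refine intervalIntegrable_of_integrableOn_Icc ht ?_
    exact (integrableOn_mul_contOn hg hFcont).congr_fun (fun x hx => mul_comm _ _)
      measurableSet_Icc
  have hcg : IntervalIntegrable (fun s => (∫ r in (0:ℝ)..t, f r) * g s) volume 0 t :=
    (intervalIntegrable_of_integrableOn_Icc ht hg).const_mul _
  have key : (∫ s in (0:ℝ)..t, f s * ∫ r in (0:ℝ)..s, g r)
      = ∫ s in (0:ℝ)..t, ((∫ r in (0:ℝ)..t, f r) - ∫ r in (0:ℝ)..s, f r) * g s := by
    rw [← hA, ← hB]; exact swap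
  have expand : (∫ s in (0:ℝ)..t, ((∫ r in (0:ℝ)..t, f r) - ∫ r in (0:ℝ)..s, f r) * g s)
      = (∫ r in (0:ℝ)..t, f r) * (∫ s in (0:ℝ)..t, g s)
        - ∫ s in (0:ℝ)..t, (∫ r in (0:ℝ)..s, f r) * g s := by
    have : (fun s => ((∫ r in (0:ℝ)..t, f r) - ∫ r in (0:ℝ)..s, f r) * g s)
        = fun s => (∫ r in (0:ℝ)..t, f r) * g s - (∫ r in (0:ℝ)..s, f r) * g s := by
      funext s; ring
    rw [this, intervalIntegral.integral_sub hcg hFg, intervalIntegral.integral_const_mul]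
  rw [key, expand]
  ring

lemma prod_rule {t : ℝ} (ht : 0 ≤ t) {f g : ℝ → ℝ}
    (hf : IntegrableOn f (Icc 0 t)) (hg : IntegrableOn g (Icc 0 t)) :
    (∫ s in (0:ℝ)..t, f s) * (∫ s in (0:ℝ)..t, g s)
      = (∫ s in (0:ℝ)..t, f s * ∫ r in (0:ℝ)..s, g r)
        + ∫ s in (0:ℝ)..t, (∫ r in (0:ℝ)..s, f r) * g s := by
  set f' := hf.1.mk f with hf'def
  set g' := hg.1.mk g with hg'def
  have hff' : f =ᵐ[volume.restrict (Icc 0 t)] f' := hf.1.ae_eq_mk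
  have hgg' : g =ᵐ[volume.restrict (Icc 0 t)] g' := hg.1.ae_eq_mk
  have hf' : IntegrableOn f' (Icc 0 t) := hf.congr hff'
  have hg' : IntegrableOn g' (Icc 0 t) := hg.congr hgg'
  have hsub : ∀ s, s ∈ Icc (0:ℝ) t → Ioc (0:ℝ) s ⊆ Icc (0:ℝ) t :=
    fun s hs x hx => ⟨hx.1.le, hx.2.trans hs.2⟩
  have hIf : ∀ s ∈ Icc (0:ℝ) t, (∫ r in (0:ℝ)..s, f r) = ∫ r in (0:ℝ)..s, f' r := by
    intro s hs
    rw [intervalIntegral.integral_of_le hs.1, intervalIntegral.integral_of_le hs.1]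
    exact integral_congr_ae (ae_restrict_of_ae_restrict_of_subset (hsub s hs) hff')
  have hIg : ∀ s ∈ Icc (0:ℝ) t, (∫ r in (0:ℝ)..s, g r) = ∫ r in (0:ℝ)..s, g' r := by
    intro s hs
    rw [intervalIntegral.integral_of_le hs.1, intervalIntegral.integral_of_le hs.1]
    exact integral_congr_ae (ae_restrict_of_ae_restrict_of_subset (hsub s hs) hgg')
  have e1 : (∫ s in (0:ℝ)..t, f s * ∫ r in (0:ℝ)..s, g r)
      = ∫ s in (0:ℝ)..t, f' s * ∫ r in (0:ℝ)..s, g' r := by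
    rw [intervalIntegral.integral_of_le ht, intervalIntegral.integral_of_le ht]
    refine integral_congr_ae ?_
    have h1 := ae_restrict_of_ae_restrict_of_subset (Ioc_subset_Icc_self (a := (0:ℝ)) (b := t)) hff'
    have h2 : ∀ᵐ s ∂volume.restrict (Ioc (0:ℝ) t), s ∈ Ioc (0:ℝ) t :=
      ae_restrict_mem measurableSet_Ioc
    filter_upwards [h1, h2] with s hs1 hs2
    rw [hs1, hIg s ⟨hs2.1.le, hs2.2⟩]
  have e2 : (∫ s in (0:ℝ)..t, (∫ r in (0:ℝ)..s, f r) * g s)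
      = ∫ s in (0:ℝ)..t, (∫ r in (0:ℝ)..s, f' r) * g' s := by
    rw [intervalIntegral.integral_of_le ht, intervalIntegral.integral_of_le ht]
    refine integral_congr_ae ?_
    have h1 := ae_restrict_of_ae_restrict_of_subset (Ioc_subset_Icc_self (a := (0:ℝ)) (b := t)) hgg'
    have h2 : ∀ᵐ s ∂volume.restrict (Ioc (0:ℝ) t), s ∈ Ioc (0:ℝ) t :=
      ae_restrict_mem measurableSet_Ioc
    filter_upwards [h1, h2] with s hs1 hs2
    rw [hs1, hIf s ⟨hs2.1.le, hs2.2⟩]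
  rw [hIf t ⟨ht, le_rfl⟩, hIg t ⟨ht, le_rfl⟩, e1, e2]
  exact prod_rule_core ht hf.1.stronglyMeasurable_mk.measurable
    hg.1.stronglyMeasurable_mk.measurable hf' hg'

end Anal

section Ups

variable {T : ℝ} {u : Letter → ℝ → ℝ}

lemma UpsRev_cons (d : Letter) (w : Word) (t : ℝ) :
    UpsRev u (d :: w) t = ∫ s in (0:ℝ)..t, u d s * UpsRev u w s := rfl

lemma contOn_upsRev (hT : 0 ≤ T) (hint : ∀ d, IntegrableOn (u d) (Icc (0:ℝ) T)) :
    ∀ w : Word, ContinuousOn (UpsRev u w) (Icc 0 T) := by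
  intro w
  induction w with
  | nil => exact continuousOn_const
  | cons d w ih =>
    have hi : IntegrableOn (fun s => u d s * UpsRev u w s) (Icc 0 T) :=
      integrableOn_mul_contOn (hint d) ih
    have := intervalIntegral.continuousOn_primitive_interval
      (μ := volume) (a := (0:ℝ)) (b := T) (f := fun s => u d s * UpsRev u w s)
      (by rwa [uIcc_of_le hT])
    rw [uIcc_of_le hT] at this
    exact this.congr fun t _ => rfl

lemma integrableOn_u_mul_upsRev (hT : 0 ≤ T) (hint : ∀ d, IntegrableOn (u d) (Icc (0:ℝ) T))
    (d : Letter) (w : Word) :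
    IntegrableOn (fun s => u d s * UpsRev u w s) (Icc 0 T) :=
  integrableOn_mul_contOn (hint d) (contOn_upsRev hT hint w)

lemma support_mul_ups_subset (P : Series) (t : ℝ) :
    Function.support (fun w => P w * Ups u w t) ⊆ Function.support P := by
  intro w hw
  intro h
  exact hw (by simp [h])

lemma UpsExt_ofWord (x : Word) (t : ℝ) : UpsExt u t (ofWord x) = Ups u x t := by
  unfold UpsExt
  rw [finsum_eq_single _ x (fun b hb => by simp [ofWord, hb])]
  simp [ofWord]

lemma UpsExt_add (P Q : Series) (hP : (Function.support P).Finite)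
    (hQ : (Function.support Q).Finite) (t : ℝ) :
    UpsExt u t (P + Q) = UpsExt u t P + UpsExt u t Q := by
  unfold UpsExt
  simp only [Pi.add_apply, add_mul]
  exact finsum_add_distrib (hP.subset (support_mul_ups_subset P t))
    (hQ.subset (support_mul_ups_subset Q t))

lemma UpsExt_eq_sum (P : Series) (hP : (Function.support P).Finite) (t : ℝ) :
    UpsExt u t P = ∑ w ∈ hP.toFinset, P w * Ups u w t := by
  refine finsum_eq_sum_of_support_subset _ ?_
  rw [Set.Finite.coe_toFinset]
  exact support_mul_ups_subset P t

lemma UpsExt_cmul (hT : 0 ≤ T) (hint : ∀ d, IntegrableOn (u d) (Icc (0:ℝ) T))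
    (P : Series) (hP : (Function.support P).Finite) (d : Letter)
    {t : ℝ} (ht : t ∈ Icc (0:ℝ) T) :
    UpsExt u t (cmul P (ofWord [d])) = ∫ s in (0:ℝ)..t, u d s * UpsExt u s P := by
  classical
  set S := hP.toFinset with hS
  have hsup : Function.support (fun w => cmul P (ofWord [d]) w * Ups u w t)
      ⊆ ↑(S.image (fun w => w ++ [d])) := by
    intro w hw
    have hw' : w ∈ Function.support (cmul P (ofWord [d])) := fun h => hw (by simp [h])
    obtain ⟨v, hv, rfl⟩ := support_cmul_single P d hw'
    simp only [Finset.coe_image, Set.mem_image, Finset.mem_coe]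
    exact ⟨v, by rwa [hS, Set.Finite.mem_toFinset], rfl⟩
  rw [show UpsExt u t (cmul P (ofWord [d]))
      = ∑ w ∈ S.image (fun w => w ++ [d]), cmul P (ofWord [d]) w * Ups u w t from
    finsum_eq_sum_of_support_subset _ hsup]
  rw [Finset.sum_image (fun x _ y _ h => List.append_left_injective [d] h)]
  have hterm : ∀ v : Word, cmul P (ofWord [d]) (v ++ [d]) * Ups u (v ++ [d]) t
      = P v * ∫ s in (0:ℝ)..t, u d s * Ups u v s := by
    intro v
    rw [cmul_single_append]
    congr 1
    unfold Ups
    rw [List.reverse_append]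
    rfl
  rw [Finset.sum_congr rfl fun v _ => hterm v]
  have hii : ∀ v : Word, IntervalIntegrable (fun s => P v * (u d s * Ups u v s)) volume 0 t := by
    intro v
    refine intervalIntegrable_of_integrableOn_Icc ht.1 ?_
    refine IntegrableOn.mono_set ?_ (Icc_subset_Icc_right ht.2)
    exact (integrableOn_u_mul_upsRev hT hint d v.reverse).const_mul (P v)
  rw [Finset.sum_congr rfl fun v _ => (intervalIntegral.integral_const_mul (P v) _).symm]
  rw [← intervalIntegral.integral_finset_sum (fun v _ => hii v)]
  refine intervalIntegral.integral_congr fun s _ => ?_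
  rw [UpsExt_eq_sum P hP s, Finset.mul_sum, ← hS]
  exact Finset.sum_congr rfl fun v _ => by ring

end Ups

section Key

lemma key_shuffle {T : ℝ} {u : Letter → ℝ → ℝ} (hT : 0 ≤ T)
    (hint : ∀ d, IntegrableOn (u d) (Icc (0:ℝ) T)) :
    ∀ (n : ℕ) (rv rw : Word), rv.length + rw.length ≤ n → ∀ t ∈ Icc (0:ℝ) T,
      UpsExt u t (shRev rv rw) = UpsRev u rv t * UpsRev u rw t := by
  intro n
  induction n with
  | zero =>
    intro rv rw h t ht
    simp only [Nat.le_zero, Nat.add_eq_zero, List.length_eq_zero_iff] at h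
    obtain ⟨rfl, rfl⟩ := h
    rw [shRev_nil, UpsExt_ofWord]
    show UpsRev u [] t = UpsRev u [] t * UpsRev u [] t
    rw [show UpsRev u [] t = 1 from rfl, mul_one]
  | succ n ih =>
    intro rv rw h t ht
    match rv, rw with
    | [], rw =>
      rw [shRev_nil, UpsExt_ofWord]
      unfold Ups
      rw [List.reverse_reverse]
      show UpsRev u rw t = UpsRev u [] t * UpsRev u rw t
      rw [show UpsRev u [] t = 1 from rfl, one_mul]
    | a :: v, [] =>
      rw [shRev_nil', UpsExt_ofWord]
      unfold Ups
      rw [List.reverse_reverse]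
      show UpsRev u (a :: v) t = UpsRev u (a :: v) t * UpsRev u [] t
      rw [show UpsRev u [] t = 1 from rfl, mul_one]
    | a₁ :: v, a₂ :: w =>
      have fin1 : (Function.support (cmul (shRev v (a₂ :: w)) (ofWord [a₁]))).Finite :=
        ((support_shRev_finite _ _).image _).subset (support_cmul_single _ _)
      have fin2 : (Function.support (cmul (shRev (a₁ :: v) w) (ofWord [a₂]))).Finite :=
        ((support_shRev_finite _ _).image _).subset (support_cmul_single _ _)
      simp only [List.length_cons] at h
      rw [shRev_cons, UpsExt_add _ _ fin1 fin2,
        UpsExt_cmul hT hint _ (support_shRev_finite _ _) _ ht,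
        UpsExt_cmul hT hint _ (support_shRev_finite _ _) _ ht]
      have hsubt : Icc (0:ℝ) t ⊆ Icc (0:ℝ) T := Icc_subset_Icc_right ht.2
      have e1 : (∫ s in (0:ℝ)..t, u a₁ s * UpsExt u s (shRev v (a₂ :: w)))
          = ∫ s in (0:ℝ)..t, u a₁ s * (UpsRev u v s * UpsRev u (a₂ :: w) s) := by
        refine intervalIntegral.integral_congr fun s hs => ?_
        rw [uIcc_of_le ht.1] at hs
        rw [ih v (a₂ :: w) (by simp; omega) s (hsubt hs)]
      have e2 : (∫ s in (0:ℝ)..t, u a₂ s * UpsExt u s (shRev (a₁ :: v) w))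
          = ∫ s in (0:ℝ)..t, u a₂ s * (UpsRev u (a₁ :: v) s * UpsRev u w s) := by
        refine intervalIntegral.integral_congr fun s hs => ?_
        rw [uIcc_of_le ht.1] at hs
        rw [ih (a₁ :: v) w (by simp; omega) s (hsubt hs)]
      rw [e1, e2]
      have hfI : IntegrableOn (fun s => u a₁ s * UpsRev u v s) (Icc 0 t) :=
        (integrableOn_u_mul_upsRev hT hint a₁ v).mono_set hsubt
      have hgI : IntegrableOn (fun s => u a₂ s * UpsRev u w s) (Icc 0 t) :=
        (integrableOn_u_mul_upsRev hT hint a₂ w).mono_set hsubt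
      have hpr := prod_rule ht.1 hfI hgI
      rw [UpsRev_cons a₁ v t, UpsRev_cons a₂ w t, hpr]
      congr 1
      · refine intervalIntegral.integral_congr fun s _ => ?_
        rw [show (∫ r in (0:ℝ)..s, u a₂ r * UpsRev u w r) = UpsRev u (a₂ :: w) s from rfl]
        ring
      · refine intervalIntegral.integral_congr fun s _ => ?_
        rw [show (∫ r in (0:ℝ)..s, u a₁ r * UpsRev u v r) = UpsRev u (a₁ :: v) s from rfl]
        ring

end Key

open MeasureTheory in
/-- For measurable, integrable controls on `[0,T]`, all words `v, w` and all
`t ∈ [0,T]`: `Υ^t(v ⧢ w) = Υ^t(v)·Υ^t(w)`. -/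
theorem upsilon_shuffle_hom (T : ℝ) (hT : 0 ≤ T) (u : Letter → ℝ → ℝ)
    (hmeas : ∀ d, Measurable (u d))
    (hint : ∀ d, IntegrableOn (u d) (Set.Icc (0 : ℝ) T)) :
    ∀ (v w : Word), ∀ t ∈ Set.Icc (0 : ℝ) T,
      UpsExt u t (shufWord v w) = Ups u v t * Ups u w t := by
  intro v w t ht
  exact key_shuffle hT hint (v.reverse.length + w.reverse.length) v.reverse w.reverse le_rfl t ht
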